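/- Let X ⊆ ℝ^n and Y ⊆ ℝ^m be nonempty compact convex sets with Y of diameter at most D_y, let p, q be proper closed convex functions with dom p = X, dom q = Y, and let h : ℝ^n×ℝ^m → ℝ be differentiable with L-Lipschitz gradient on X×Y and with h(x,·) concave for each x ∈ X. Let H(x,y) = h(x,y)+p(x)−q(y), H* = inf_{x∈X} sup_{y∈Y} H(x,y), fix ε > 0, ε̂₀ > 0, x̂⁰ ∈ X, ŷ⁰ ∈ Y, set ε̂_k = ε̂₀/(k+1), and define h_k(x,y) = h(x,y) − ε‖y−ŷ⁰‖²/(4D_y) + L‖x−x^k‖². Suppose (x^k, y^k)_{k≥0} ⊆ X×Y with x⁰ = x̂⁰ is such that for every k, (x^{k+1}, y^{k+1}) is an ε̂_k-primal-dual stationary point of min_x max_y {h_k(x,y)+p(x)−q(y)}. Then for every K ≥ 0: min_{0≤k≤K} ‖x^{k+1} − x^k‖² ≤ (sup_{y∈Y} H(x̂⁰,y) − H* + εD_y/4)/(L(K+1)) + 2ε̂₀²(1 + 4D_y²L²ε^{-2})/(L²(K+1)). -/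

import Mathlib

/-!
Put `μ = ε/(2D_y)`, `Φ(x,y) = h(x,y) + p(x) - q(y) - μ/2 ‖y - ŷ⁰‖²` and `V(x) = sup_{y ∈ Y} Φ(x,y)`.
At `(a, b) = (x^{k+1}, y^{k+1})`, the quadratic lower bound coming from the `L`-Lipschitz
gradient and approximate stationarity in `x` give
`Φ(a,b) + L‖a - x^k‖² ≤ Φ(x^k,b) + ε̂_k²/(2L) ≤ V(x^k) + ε̂_k²/(2L)`,
while approximate stationarity of the `μ`-strongly concave function `Φ(a,·)` gives
`V(a) ≤ Φ(a,b) + ε̂_k²/(2μ)`. So `V` decreases by at least `L‖x^{k+1} - x^k‖²` up to an error of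
order `ε̂_k² = ε̂₀²/(k+1)²`, which is summable. Telescoping over `k ≤ K` and using
`V(x⁰) ≤ sup_y H(x̂⁰,y)` and `V(x^{K+1}) ≥ H* - μD_y²/2 = H* - εD_y/4`, the smallest step obeys
the bound.
-/

open RealInnerProductSpace Set Finset Bornology

lemma mul_sub_half_mul_sq_le_sq_div {μ : ℝ} (hμ : 0 < μ) (e d : ℝ) :
    e * d - μ / 2 * d ^ 2 ≤ e ^ 2 / (2 * μ) := by
  have hsq : 0 ≤ (μ * d - e) ^ 2 / (2 * μ) := by positivity
  have hid : (μ * d - e) ^ 2 / (2 * μ) = e ^ 2 / (2 * μ) - (e * d - μ / 2 * d ^ 2) := by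
    field_simp
    ring
  linarith

lemma add_deriv_sub_half_le_of_deriv_ge {f f' : ℝ → ℝ} {C : ℝ}
    (hf : ∀ t ∈ Icc (0 : ℝ) 1, HasDerivAt f (f' t) t)
    (hf' : ∀ t ∈ Icc (0 : ℝ) 1, f' 0 - C * t ≤ f' t) :
    f 0 + f' 0 - C / 2 ≤ f 1 := by
  let G : ℝ → ℝ := fun t => f t - t * f' 0 + C / 2 * t ^ 2
  have hG : ∀ t ∈ Icc (0 : ℝ) 1, HasDerivAt G (f' t - f' 0 + C * t) t := fun t ht => by
    have hlin : HasDerivAt (fun t : ℝ => t * f' 0) (f' 0) t := by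
      simpa using (hasDerivAt_id t).mul_const (f' 0)
    have hquad : HasDerivAt (fun t : ℝ => C / 2 * t ^ 2) (C * t) t :=
      ((hasDerivAt_pow 2 t).const_mul (C / 2)).congr_deriv (by push_cast; ring)
    exact ((hf t ht).sub hlin).add hquad
  have hmono : MonotoneOn G (Icc 0 1) := by
    refine monotoneOn_of_hasDerivWithinAt_nonneg (convex_Icc 0 1)
      (fun t ht => (hG t ht).continuousAt.continuousWithinAt)
      (fun t ht => (hG t (interior_subset ht)).hasDerivWithinAt) fun t ht => ?_
    linarith [hf' t (interior_subset ht)]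
  have := hmono (left_mem_Icc.2 zero_le_one) (right_mem_Icc.2 zero_le_one) zero_le_one
  simp only [G] at this
  linarith

lemma sum_range_one_div_succ_sq_le_two (K : ℕ) :
    ∑ k ∈ range (K + 1), 1 / ((k : ℝ) + 1) ^ 2 ≤ 2 := by
  have := sum_Ioo_inv_sq_le (α := ℝ) 0 (K + 2)
  rw [← Finset.Ico_succ_left_eq_Ioo, Finset.sum_Ico_eq_sum_range] at this
  simpa [add_comm, one_div] using this

lemma exists_le_of_le_sub_add_sq_div_succ {u V : ℕ → ℝ} {L B e₀ : ℝ} (hL : 0 < L) (hB : 0 ≤ B)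
    (hstep : ∀ k : ℕ, L * u k ≤ V k - V (k + 1) + (e₀ / (k + 1)) ^ 2 * B / L) (K : ℕ) :
    ∃ k ≤ K, u k ≤ (V 0 - V (K + 1)) / (L * (K + 1)) + 2 * e₀ ^ 2 * B / (L ^ 2 * (K + 1)) := by
  have hsum : ∑ k ∈ range (K + 1), L * u k ≤ V 0 - V (K + 1) + 2 * e₀ ^ 2 * B / L :=
    calc ∑ k ∈ range (K + 1), L * u k
        ≤ ∑ k ∈ range (K + 1), (V k - V (k + 1) + (e₀ / (k + 1)) ^ 2 * B / L) :=
          sum_le_sum fun k _ => hstep k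
      _ = V 0 - V (K + 1) + e₀ ^ 2 * B / L * ∑ k ∈ range (K + 1), 1 / ((k : ℝ) + 1) ^ 2 := by
          rw [sum_add_distrib, sum_range_sub', mul_sum]
          congr 1
          exact sum_congr rfl fun k _ => by rw [div_pow]; field_simp
      _ ≤ V 0 - V (K + 1) + e₀ ^ 2 * B / L * 2 := by
          gcongr
          exact sum_range_one_div_succ_sq_le_two K
      _ = V 0 - V (K + 1) + 2 * e₀ ^ 2 * B / L := by ring
  obtain ⟨k, hk, hle⟩ := exists_le_of_sum_le ⟨0, by simp⟩
    (hsum.trans_eq (by rw [sum_const, card_range, nsmul_eq_mul]; push_cast; field_simp) :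
      ∑ k ∈ range (K + 1), L * u k
        ≤ ∑ _k ∈ range (K + 1), (V 0 - V (K + 1) + 2 * e₀ ^ 2 * B / L) / (K + 1))
  refine ⟨k, Nat.lt_succ_iff.1 (mem_range.1 hk), ?_⟩
  rw [le_div_iff₀ (by positivity)] at hle
  calc u k ≤ (V 0 - V (K + 1) + 2 * e₀ ^ 2 * B / L) / (L * (K + 1)) := by
        rw [le_div_iff₀ (by positivity)]
        linarith
    _ = _ := by field_simp

lemma sq_div_two_mul_add_sq_div_le {L ε D : ℝ} (hL : 0 < L) (hε : 0 < ε) (hD : 0 < D) (e : ℝ) :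
    e ^ 2 / (2 * L) + e ^ 2 / (2 * (ε / (2 * D)))
      ≤ e ^ 2 * (1 + 4 * D ^ 2 * L ^ 2 / ε ^ 2) / L := by
  have hamgm := mul_sub_half_mul_sq_le_sq_div (μ := 8) (by norm_num) 1 (D * L / ε)
  have hlhs : e ^ 2 / (2 * L) + e ^ 2 / (2 * (ε / (2 * D))) = e ^ 2 * (1 / 2 + D * L / ε) / L := by
    field_simp
  have hrhs : 4 * D ^ 2 * L ^ 2 / ε ^ 2 = 4 * (D * L / ε) ^ 2 := by ring
  rw [hlhs, hrhs]
  gcongr e ^ 2 * ?_ / L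
  linarith

lemma csSup_image_le_csSup_image_add {α : Type*} {s : Set α} (hs : s.Nonempty) {f g : α → ℝ}
    (hg : BddAbove (g '' s)) {C : ℝ} (hfg : ∀ u ∈ s, f u ≤ g u + C) :
    sSup (f '' s) ≤ sSup (g '' s) + C :=
  csSup_le (hs.image f) <| Set.forall_mem_image.2 fun u hu =>
    (hfg u hu).trans (add_le_add_left (le_csSup hg (mem_image_of_mem g hu)) C)

lemma BddAbove.image_of_le {α : Type*} {s : Set α} {f g : α → ℝ} (hg : BddAbove (g '' s))
    (hfg : ∀ u ∈ s, f u ≤ g u) : BddAbove (f '' s) := by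
  obtain ⟨M, hM⟩ := hg
  exact ⟨M, Set.forall_mem_image.2 fun u hu => (hfg u hu).trans (hM (mem_image_of_mem g hu))⟩

section InnerProductSpace

variable {E : Type*} [NormedAddCommGroup E] [InnerProductSpace ℝ E]

lemma Bornology.IsBounded.bddAbove_image_of_le_add_inner {s : Set E} (hs : IsBounded s)
    {f : E → ℝ} {c : ℝ} {g a : E} (hf : ∀ u ∈ s, f u ≤ c + ⟪g, u - a⟫) : BddAbove (f '' s) := by
  obtain ⟨r, hr⟩ := (Metric.isBounded_iff_subset_closedBall a).1 hs
  refine ⟨c + ‖g‖ * r, Set.forall_mem_image.2 fun u hu => (hf u hu).trans ?_⟩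
  gcongr
  exact (real_inner_le_norm _ _).trans
    (mul_le_mul_of_nonneg_left (mem_closedBall_iff_norm.1 (hr hu)) (norm_nonneg g))

lemma Bornology.IsBounded.bddBelow_image_of_add_inner_le {s : Set E} (hs : IsBounded s)
    {f : E → ℝ} {c : ℝ} {g a : E} (hf : ∀ u ∈ s, c + ⟪g, u - a⟫ ≤ f u) : BddBelow (f '' s) := by
  obtain ⟨r, hr⟩ := (Metric.isBounded_iff_subset_closedBall a).1 hs
  refine ⟨c - ‖g‖ * r, Set.forall_mem_image.2 fun u hu => le_trans ?_ (hf u hu)⟩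
  have := (abs_real_inner_le_norm g (u - a)).trans
    (mul_le_mul_of_nonneg_left (mem_closedBall_iff_norm.1 (hr hu)) (norm_nonneg g))
  linarith [neg_abs_le ⟪g, u - a⟫]

lemma IsCompact.bddBelow_image_sSup {β : Type*} {X : Set E} {Y : Set β} {h : E → β → ℝ}
    {p : E → ℝ} {q : β → ℝ} {y₀ : β} (hX : IsCompact X) (hy₀ : y₀ ∈ Y)
    (hcont : ContinuousOn (fun x => h x y₀) X) {a s : E} (hs : ∀ u ∈ X, p a + ⟪s, u - a⟫ ≤ p u)
    (hbdd : ∀ x ∈ X, BddAbove ((fun y => h x y + p x - q y) '' Y)) :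
    BddBelow ((fun x => sSup ((fun y => h x y + p x - q y) '' Y)) '' X) := by
  obtain ⟨m₁, hm₁⟩ := hX.bddBelow_image hcont
  obtain ⟨m₂, hm₂⟩ := hX.isBounded.bddBelow_image_of_add_inner_le hs
  refine ⟨m₁ + m₂ - q y₀, Set.forall_mem_image.2 fun x hx => ?_⟩
  linarith [hm₁ (mem_image_of_mem _ hx), hm₂ (mem_image_of_mem _ hx),
    le_csSup (hbdd x hx) (mem_image_of_mem _ hy₀)]

variable [CompleteSpace E]

lemma HasGradientAt.hasDerivAt_lineMap {f : E → ℝ} {g a b : E} {t : ℝ}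
    (hg : HasGradientAt f g (AffineMap.lineMap a b t)) :
    HasDerivAt (fun t : ℝ => f (AffineMap.lineMap a b t)) ⟪g, b - a⟫ t := by
  simpa [InnerProductSpace.toDual_apply_apply, Function.comp_def] using
    hg.hasFDerivAt.comp_hasDerivAt t AffineMap.hasDerivAt_lineMap

lemma ConcaveOn.le_add_inner_of_hasGradientAt {s : Set E} {f : E → ℝ} (hf : ConcaveOn ℝ s f)
    {a b g : E} (ha : a ∈ s) (hb : b ∈ s) (hg : HasGradientAt f g a) :
    f b ≤ f a + ⟪g, b - a⟫ := by
  have hslope := (hf.comp_affineMap (AffineMap.lineMap a b)).slope_le_of_hasDerivAt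
    (x := 0) (y := 1) (by simpa using ha) (by simpa using hb) zero_lt_one
    (HasGradientAt.hasDerivAt_lineMap (by simpa using hg))
  simp only [slope_def_field, Function.comp_apply, AffineMap.lineMap_apply_one,
    AffineMap.lineMap_apply_zero, sub_zero, div_one] at hslope
  linarith

lemma Convex.add_inner_sub_le_of_norm_gradient_sub_le {s : Set E} (hs : Convex ℝ s) {f : E → ℝ}
    {g : E → E} (hg : ∀ z ∈ s, HasGradientAt f (g z) z) {a b : E} (ha : a ∈ s) (hb : b ∈ s)
    {L : ℝ} (hlip : ∀ z ∈ s, ‖g z - g a‖ ≤ L * ‖z - a‖) :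
    f a + ⟪g a, b - a⟫ - L / 2 * ‖b - a‖ ^ 2 ≤ f b := by
  have hmem : ∀ t ∈ Icc (0 : ℝ) 1, AffineMap.lineMap a b t ∈ s := fun t ht =>
    hs.lineMap_mem ha hb ht
  have hderiv_ge : ∀ t ∈ Icc (0 : ℝ) 1,
      ⟪g a, b - a⟫ - L * ‖b - a‖ ^ 2 * t ≤ ⟪g (AffineMap.lineMap a b t), b - a⟫ := by
    intro t ht
    have hdist : ‖AffineMap.lineMap a b t - a‖ = t * ‖b - a‖ := by
      rw [← vsub_eq_sub, AffineMap.lineMap_vsub_left, vsub_eq_sub, norm_smul,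
        Real.norm_of_nonneg ht.1]
    have hcs := real_inner_le_norm (g a - g (AffineMap.lineMap a b t)) (b - a)
    rw [inner_sub_left, norm_sub_rev] at hcs
    have hlip_t := hlip _ (hmem t ht)
    rw [hdist] at hlip_t
    nlinarith [mul_le_mul_of_nonneg_right hlip_t (norm_nonneg (b - a))]
  have := add_deriv_sub_half_le_of_deriv_ge
    (fun t ht => (hg _ (hmem t ht)).hasDerivAt_lineMap) (by simpa using hderiv_ge)
  simp only [AffineMap.lineMap_apply_zero, AffineMap.lineMap_apply_one] at this
  linarith

lemma Convex.descent_of_approx_prox_stationary {s : Set E} (hs : Convex ℝ s) {f p : E → ℝ}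
    {g : E → E} (hg : ∀ z ∈ s, HasGradientAt f (g z) z) {a x₀ σ : E} (ha : a ∈ s) (hx₀ : x₀ ∈ s)
    {L e : ℝ} (hL : 0 < L) (hlip : ∀ z ∈ s, ‖g z - g a‖ ≤ L * ‖z - a‖)
    (hσ : ∀ u ∈ s, p a + ⟪σ, u - a⟫ ≤ p u) (hstat : ‖g a + (2 * L) • (a - x₀) + σ‖ ≤ e) :
    f a + p a + L * ‖a - x₀‖ ^ 2 ≤ f x₀ + p x₀ + e ^ 2 / (2 * L) := by
  have hf := hs.add_inner_sub_le_of_norm_gradient_sub_le hg ha hx₀ hlip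
  have hp := hσ x₀ hx₀
  have hsplit : ⟪g a, x₀ - a⟫ + ⟪σ, x₀ - a⟫
      = ⟪g a + (2 * L) • (a - x₀) + σ, x₀ - a⟫ + 2 * L * ‖a - x₀‖ ^ 2 := by
    rw [inner_add_left, inner_add_left, real_inner_smul_left, ← neg_sub a x₀]
    simp only [inner_neg_right, real_inner_self_eq_norm_sq]
    ring
  have hcs : -(e * ‖a - x₀‖) ≤ ⟪g a + (2 * L) • (a - x₀) + σ, x₀ - a⟫ := by
    have := neg_le_of_abs_le (abs_real_inner_le_norm (g a + (2 * L) • (a - x₀) + σ) (x₀ - a))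
    rw [norm_sub_rev] at this
    nlinarith [mul_le_mul_of_nonneg_right hstat (norm_nonneg (a - x₀))]
  have hamgm := mul_sub_half_mul_sq_le_sq_div hL e ‖a - x₀‖
  rw [norm_sub_rev x₀ a] at hf
  linarith

lemma ConcaveOn.penalized_le_of_approx_stationary {s : Set E} {φ q : E → ℝ}
    (hφ : ConcaveOn ℝ s φ) {b y₀ g t : E} (hb : b ∈ s) (hg : HasGradientAt φ g b)
    (ht : ∀ v ∈ s, q b + ⟪t, v - b⟫ ≤ q v) {μ e : ℝ} (hμ : 0 < μ)
    (hstat : ‖g - μ • (b - y₀) - t‖ ≤ e) {w : E} (hw : w ∈ s) :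
    φ w - q w - μ / 2 * ‖w - y₀‖ ^ 2 ≤ φ b - q b - μ / 2 * ‖b - y₀‖ ^ 2 + e ^ 2 / (2 * μ) := by
  have hφw := hφ.le_add_inner_of_hasGradientAt hb hw hg
  have hqw := ht w hw
  have hpen : ‖w - y₀‖ ^ 2 = ‖b - y₀‖ ^ 2 + 2 * ⟪b - y₀, w - b⟫ + ‖w - b‖ ^ 2 := by
    rw [← sub_add_sub_cancel w b y₀, norm_add_sq_real, real_inner_comm]
    ring
  have hsplit : ⟪g - μ • (b - y₀) - t, w - b⟫ = ⟪g, w - b⟫ - μ * ⟪b - y₀, w - b⟫ - ⟪t, w - b⟫ := by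
    rw [inner_sub_left, inner_sub_left, real_inner_smul_left]
  have hcs : ⟪g - μ • (b - y₀) - t, w - b⟫ ≤ e * ‖w - b‖ :=
    (real_inner_le_norm _ _).trans (mul_le_mul_of_nonneg_right hstat (norm_nonneg _))
  have hamgm := mul_sub_half_mul_sq_le_sq_div hμ e ‖w - b‖
  rw [hpen]
  linarith

lemma Bornology.IsBounded.bddAbove_image_add_sub_of_concaveOn {s : Set E} (hs : IsBounded s)
    {φ q : E → ℝ} (hφ : ConcaveOn ℝ s φ) {b g t : E} (hb : b ∈ s) (hg : HasGradientAt φ g b)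
    (ht : ∀ v ∈ s, q b + ⟪t, v - b⟫ ≤ q v) (C : ℝ) :
    BddAbove ((fun w => φ w + C - q w) '' s) :=
  hs.bddAbove_image_of_le_add_inner (c := φ b + C - q b) (g := g - t) (a := b) fun w hw => by
    have := hφ.le_add_inner_of_hasGradientAt hb hw hg
    rw [inner_sub_left]
    linarith [ht w hw]

end InnerProductSpace

section Minimax

variable {E F : Type*} [NormedAddCommGroup F]

noncomputable def penalizedValue (Y : Set F) (h : E → F → ℝ) (p : E → ℝ) (q : F → ℝ) (μ : ℝ)
    (y₀ : F) (x : E) : ℝ :=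
  sSup ((fun y => h x y + p x - q y - μ / 2 * ‖y - y₀‖ ^ 2) '' Y)

variable {X : Set E} {Y : Set F} {h : E → F → ℝ} {p : E → ℝ} {q : F → ℝ} {μ : ℝ} {y₀ : F}

lemma penalizedValue_le (hy₀ : y₀ ∈ Y) (hμ : 0 ≤ μ) {x : E}
    (hbdd : BddAbove ((fun y => h x y + p x - q y) '' Y)) :
    penalizedValue Y h p q μ y₀ x ≤ sSup ((fun y => h x y + p x - q y) '' Y) :=
  csSup_le ((nonempty_of_mem hy₀).image _) <| Set.forall_mem_image.2 fun y hy =>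
    (sub_le_self _ (by positivity)).trans (le_csSup hbdd (mem_image_of_mem _ hy))

lemma sSup_le_penalizedValue_add (hy₀ : y₀ ∈ Y) (hμ : 0 ≤ μ) {D : ℝ}
    (hD : ∀ y ∈ Y, ‖y - y₀‖ ≤ D) {x : E} (hbdd : BddAbove ((fun y => h x y + p x - q y) '' Y)) :
    sSup ((fun y => h x y + p x - q y) '' Y) ≤ penalizedValue Y h p q μ y₀ x + μ / 2 * D ^ 2 :=
  csSup_image_le_csSup_image_add ⟨y₀, hy₀⟩
    (hbdd.image_of_le fun y _ => sub_le_self _ (by positivity)) fun y hy => by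
      have := pow_le_pow_left₀ (norm_nonneg _) (hD y hy) 2
      nlinarith

variable [NormedAddCommGroup E] [InnerProductSpace ℝ E] [CompleteSpace E] [InnerProductSpace ℝ F]
  [CompleteSpace F]

lemma penalizedValue_add_le_of_approx_stationary (hX : Convex ℝ X) {gx : E → E} {gy : F}
    {s : E} {t : F} {a x₀ : E} {b : F} {L e : ℝ} (hL : 0 < L) (hμ : 0 < μ)
    (ha : a ∈ X) (hx₀ : x₀ ∈ X) (hb : b ∈ Y)
    (hgx : ∀ z ∈ X, HasGradientAt (fun z => h z b) (gx z) z)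
    (hlip : ∀ z ∈ X, ‖gx z - gx a‖ ≤ L * ‖z - a‖)
    (hconc : ConcaveOn ℝ Y (h a)) (hgy : HasGradientAt (h a) gy b)
    (hs : ∀ u ∈ X, p a + ⟪s, u - a⟫ ≤ p u) (ht : ∀ v ∈ Y, q b + ⟪t, v - b⟫ ≤ q v)
    (hsx : ‖gx a + (2 * L) • (a - x₀) + s‖ ≤ e) (hty : ‖gy - μ • (b - y₀) - t‖ ≤ e)
    (hbdd : BddAbove ((fun y => h x₀ y + p x₀ - q y) '' Y)) :
    L * ‖a - x₀‖ ^ 2 + penalizedValue Y h p q μ y₀ a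
      ≤ penalizedValue Y h p q μ y₀ x₀ + e ^ 2 / (2 * L) + e ^ 2 / (2 * μ) := by
  have hprimal := hX.descent_of_approx_prox_stationary hgx ha hx₀ hL hlip hs hsx
  have hdual : penalizedValue Y h p q μ y₀ a
      ≤ h a b + p a - q b - μ / 2 * ‖b - y₀‖ ^ 2 + e ^ 2 / (2 * μ) :=
    csSup_le ⟨_, mem_image_of_mem _ hb⟩ <| Set.forall_mem_image.2 fun w hw => by
      linarith [hconc.penalized_le_of_approx_stationary hb hgy ht hμ hty hw]
  have hx₀b : h x₀ b + p x₀ - q b - μ / 2 * ‖b - y₀‖ ^ 2 ≤ penalizedValue Y h p q μ y₀ x₀ :=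
    le_csSup (hbdd.image_of_le fun y _ => sub_le_self _ (by positivity)) (mem_image_of_mem _ hb)
  linarith

end Minimax

theorem successive_iterate_bound {n m : ℕ}
    (X : Set (EuclideanSpace ℝ (Fin n))) (Y : Set (EuclideanSpace ℝ (Fin m)))
    (Dy : ℝ) (hDy : 0 < Dy)
    (hXcp : IsCompact X) (hXcv : Convex ℝ X)
    (hdY : ∀ u ∈ Y, ∀ v ∈ Y, ‖u - v‖ ≤ Dy)
    (p : EuclideanSpace ℝ (Fin n) → ℝ) (q : EuclideanSpace ℝ (Fin m) → ℝ)
    (h : EuclideanSpace ℝ (Fin n) → EuclideanSpace ℝ (Fin m) → ℝ)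
    (gx : EuclideanSpace ℝ (Fin n) → EuclideanSpace ℝ (Fin m) → EuclideanSpace ℝ (Fin n))
    (gy : EuclideanSpace ℝ (Fin n) → EuclideanSpace ℝ (Fin m) → EuclideanSpace ℝ (Fin m))
    (L : ℝ) (hL : 0 < L)
    (hgx : ∀ x ∈ X, ∀ y ∈ Y, HasGradientAt (fun x' => h x' y) (gx x y) x)
    (hgy : ∀ x ∈ X, ∀ y ∈ Y, HasGradientAt (fun y' => h x y') (gy x y) y)
    (hLip : ∀ x ∈ X, ∀ y ∈ Y, ∀ x' ∈ X, ∀ y' ∈ Y,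
      ‖gx x y - gx x' y'‖ ^ 2 + ‖gy x y - gy x' y'‖ ^ 2
        ≤ L ^ 2 * (‖x - x'‖ ^ 2 + ‖y - y'‖ ^ 2))
    (hconc : ∀ x ∈ X, ConcaveOn ℝ Y (fun y => h x y))
    (ε εh0 : ℝ) (hε : 0 < ε)
    (xh0 : EuclideanSpace ℝ (Fin n))
    (y0 : EuclideanSpace ℝ (Fin m)) (hy0 : y0 ∈ Y)
    (x : ℕ → EuclideanSpace ℝ (Fin n)) (y : ℕ → EuclideanSpace ℝ (Fin m))
    (hx0 : x 0 = xh0)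
    (hmem : ∀ k, x k ∈ X ∧ y k ∈ Y)
    -- (x^{k+1}, y^{k+1}) is an ε̂_k-primal-dual stationary point of
    -- min_x max_y {h_k(x,y)+p(x)−q(y)}, h_k(x,y) = h(x,y) − ε‖y−ŷ⁰‖²/(4D_y) + L‖x−x^k‖²
    (hstat : ∀ k : ℕ, ∃ s t,
      (∀ u ∈ X, p (x (k+1)) + @inner ℝ _ _ s (u - x (k+1)) ≤ p u)
      ∧ (∀ v ∈ Y, q (y (k+1)) + @inner ℝ _ _ t (v - y (k+1)) ≤ q v)
      ∧ ‖gx (x (k+1)) (y (k+1)) + (2 * L) • (x (k+1) - x k) + s‖ ≤ εh0 / (k + 1)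
      ∧ ‖gy (x (k+1)) (y (k+1)) - (ε / (2 * Dy)) • (y (k+1) - y0) - t‖ ≤ εh0 / (k + 1)) :
    ∀ K : ℕ, ∃ k ≤ K, ‖x (k+1) - x k‖ ^ 2
      ≤ (sSup ((fun y' => h xh0 y' + p xh0 - q y') '' Y)
          - sInf ((fun x' => sSup ((fun y' => h x' y' + p x' - q y') '' Y)) '' X)
          + ε * Dy / 4) / (L * (K + 1))
        + 2 * εh0 ^ 2 * (1 + 4 * Dy ^ 2 * L ^ 2 / ε ^ 2) / (L ^ 2 * (K + 1)) := by
  subst hx0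
  intro K
  have hxX k : x k ∈ X := (hmem k).1
  have hyY k : y k ∈ Y := (hmem k).2
  obtain ⟨s₁, t₁, hs₁, ht₁, -, -⟩ := hstat 0
  have hμ : 0 < ε / (2 * Dy) := by positivity
  have hYb : IsBounded Y := Metric.isBounded_iff.2
    ⟨Dy, fun u hu v hv => (dist_eq_norm u v).trans_le (hdY u hu v hv)⟩
  have hbdd : ∀ a ∈ X, BddAbove ((fun w => h a w + p a - q w) '' Y) := fun a ha =>
    hYb.bddAbove_image_add_sub_of_concaveOn (hconc a ha) (hyY 1) (hgy a ha _ (hyY 1)) ht₁ (p a)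
  have hlipx : ∀ b ∈ Y, ∀ a ∈ X, ∀ z ∈ X, ‖gx z b - gx a b‖ ≤ L * ‖z - a‖ := by
    intro b hb a ha z hz
    have := hLip z hz b hb a ha b hb
    rw [sub_self, norm_zero] at this
    rw [← sq_le_sq₀ (norm_nonneg _) (by positivity)]
    nlinarith [sq_nonneg ‖gy z b - gy a b‖]
  have hstep : ∀ k : ℕ, L * ‖x (k + 1) - x k‖ ^ 2
      ≤ penalizedValue Y h p q (ε / (2 * Dy)) y0 (x k)
        - penalizedValue Y h p q (ε / (2 * Dy)) y0 (x (k + 1))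
        + (εh0 / (k + 1)) ^ 2 * (1 + 4 * Dy ^ 2 * L ^ 2 / ε ^ 2) / L := by
    intro k
    obtain ⟨s, t, hs, ht, hsx, hty⟩ := hstat k
    have hdesc := penalizedValue_add_le_of_approx_stationary hXcv hL hμ (hxX (k + 1)) (hxX k)
      (hyY (k + 1)) (fun z hz => hgx z hz _ (hyY (k + 1))) (hlipx _ (hyY _) _ (hxX _))
      (hconc _ (hxX _)) (hgy _ (hxX _) _ (hyY _)) hs ht hsx hty (hbdd _ (hxX k))
    have hconst := sq_div_two_mul_add_sq_div_le hL hε hDy (εh0 / (k + 1))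
    linarith
  have hGbdd := hXcp.bddBelow_image_sSup hy0
    (fun a ha => (hgx a ha y0 hy0).continuousAt.continuousWithinAt) hs₁ hbdd
  have hV₀ := penalizedValue_le hy0 hμ.le (hbdd _ (hxX 0))
  have hVK := (csInf_le hGbdd (mem_image_of_mem _ (hxX (K + 1)))).trans
    (sSup_le_penalizedValue_add hy0 hμ.le (fun w hw => hdY w hw y0 hy0) (hbdd _ (hxX (K + 1))))
  have hpenalty : ε / (2 * Dy) / 2 * Dy ^ 2 = ε * Dy / 4 := by field_simp; ring
  obtain ⟨k, hk, hle⟩ := exists_le_of_le_sub_add_sq_div_succ hL (by positivity) hstep K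
  refine ⟨k, hk, hle.trans ?_⟩
  gcongr
  linarith
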